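/- arXiv:2111.07066 — 2 statements merged into one kernel-verified Lean document; each statement's English description precedes it below -/
import Mathlib

section
/- Let G be a t.d.l.c. group, let (K,U) be a TMS pair of G, and let V and W be compact open subgroups of G such that V is contained in some G-conjugate of UN for some compact normal subgroup N of G, and W contains ⋂_{g ∈ G} gUg^{-1}. Then the set of g ∈ G such that gKg^{-1} ≤ V but gKg^{-1} is not contained in W is compact and open in G, while the set of g ∈ G such that gKg^{-1} ≤ W does not have compact closure. -/
open scoped Pointwise

section Prelim

variable (G : Type*) [Group G] [TopologicalSpace G]

/-- A topological group is compactly generated if it is generated by a compact subset. -/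
def CompactlyGeneratedGrp : Prop := ∃ S : Set G, IsCompact S ∧ Subgroup.closure S = ⊤

/-- G has no nontrivial compact normal subgroup. -/
def NoCompactNormal : Prop :=
  ∀ N : Subgroup G, N.Normal → IsCompact (N : Set G) → N = ⊥

variable {G}

/-- (K,U) is a TMS pair of G. -/
def IsTMSPair (K U : Subgroup G) : Prop :=
  IsCompact (U : Set G) ∧ IsOpen (U : Set G) ∧
  (∀ N : Subgroup G, N.Normal → IsCompact (N : Set G) → ∀ h : G,
    IsCompact (closure {g : G | (∀ k ∈ K, g * k * g⁻¹ ∈ (U : Set G) * (N : Set G)) ∧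
      ¬ ∀ k ∈ K, g * k * g⁻¹ ∈ (fun x => h * x * h⁻¹) '' (U : Set G)})) ∧
  (¬ IsCompact (closure {g : G | ∀ k ∈ K, g * k * g⁻¹ ∈ (U : Set G)})) ∧
  (∀ N : Subgroup G, N.Normal → IsCompact (N : Set G) → N.relIndex K = 0)

/-- K is a TMS subgroup of G. -/
def IsTMSSubgroup (K : Subgroup G) : Prop := ∃ U : Subgroup G, IsTMSPair K U

/-- g belongs to the quasi-centre of G, i.e. has open centraliser. -/
def InQuasiCentre (g : G) : Prop :=
  IsOpen ((Subgroup.centralizer {g} : Subgroup G) : Set G)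

/-- A subgroup is locally normal if its normaliser is open. -/
def IsLocallyNormal (H : Subgroup G) : Prop := IsOpen ((Subgroup.normalizer (H : Set G) : Subgroup G) : Set G)

variable (G)

/-- G is [A]-semisimple: trivial quasi-centre and no nontrivial abelian locally normal
subgroup. -/
def ASemisimple : Prop :=
  (∀ g : G, InQuasiCentre g → g = 1) ∧
  (∀ H : Subgroup G, IsLocallyNormal H → (∀ a ∈ H, ∀ b ∈ H, a * b = b * a) → H = ⊥)

variable {G}

/-- A compact open subgroup U is of finite quotient type if for each n ≥ 1 it has only
finitely many open normal subgroups of index n. -/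
def FiniteQuotientType (U : Subgroup G) : Prop :=
  ∀ n : ℕ, 0 < n →
    {N : Subgroup G | N ≤ U ∧ IsOpen (N : Set G) ∧ (∀ u ∈ U, ∀ x ∈ N, u * x * u⁻¹ ∈ N) ∧
      N.relIndex U = n}.Finite

variable (G)

/-- G is locally of finite quotient type. -/
def LocallyFiniteQuotientType : Prop :=
  ∀ U : Subgroup G, IsCompact (U : Set G) → IsOpen (U : Set G) → FiniteQuotientType U

variable {G}

/-- K is a local direct factor of G: a closed subgroup such that some open subgroup of G
splits as a topological direct product K × L. -/
def LocalDirectFactor (K : Subgroup G) : Prop :=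
  IsClosed (K : Set G) ∧
  ∃ L O : Subgroup G, IsClosed (L : Set G) ∧ IsOpen (O : Set G) ∧ K ≤ O ∧ L ≤ O ∧
    K ⊓ L = ⊥ ∧ (∀ k ∈ K, ∀ l ∈ L, k * l = l * k) ∧ (K : Set G) * (L : Set G) = (O : Set G)

end Prelim

/-!
Write `T(S)` (`conjTransporter K S`) for the set of `g` with `gKg⁻¹ ⊆ S`. Since `U` is compact and `W` is an open
neighbourhood of the core `⋂ gUg⁻¹`, already finitely many conjugates `a₁Ua₁⁻¹, …, aₙUaₙ⁻¹` have
intersection inside `W`. Hence `T(S) \ T(W)` is covered by the sets `T(S) \ T(aᵢUaᵢ⁻¹)`, which have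
compact closure for `S = V` and for `S = U` by condition (a) of a TMS pair. For `S = V` this gives
the compactness claim; for `S = U` it shows that if `T(W)` had compact closure then so would
`T(U)`, contradicting condition (b).
-/

section ConjTransporter

variable {G : Type*} [Group G]

def conjTransporter (K : Subgroup G) (S : Set G) : Set G :=
  {g | ∀ k ∈ K, g * k * g⁻¹ ∈ S}

variable (K : Subgroup G)

lemma conjTransporter_mono {S S' : Set G} (h : S ⊆ S') :
    conjTransporter K S ⊆ conjTransporter K S' :=
  fun _ hg k hk => h (hg k hk)

lemma conj_image_eq_preimage (a : G) (S : Set G) :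
    (fun x => a * x * a⁻¹) '' S = (fun x => a⁻¹ * x * a) ⁻¹' S :=
  congrFun (Set.image_eq_preimage_of_inverse (fun x => by group) (fun x => by group)) S

lemma conjTransporter_conj_image (h : G) (S : Set G) :
    conjTransporter K ((fun x => h * x * h⁻¹) '' S) = (h * ·) '' conjTransporter K S := by
  ext g
  rw [Set.image_mul_left, conj_image_eq_preimage]
  refine forall₂_congr fun k _ => ?_
  simp only [Set.mem_preimage]
  rw [show h⁻¹ * (g * k * g⁻¹) * h = h⁻¹ * g * k * (h⁻¹ * g)⁻¹ by group]

lemma conj_image_conj_image (a b : G) (S : Set G) :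
    (fun x => a * x * a⁻¹) '' ((fun x => b * x * b⁻¹) '' S) =
      (fun x => (a * b) * x * (a * b)⁻¹) '' S := by
  rw [Set.image_image]
  congr 1
  funext x
  group

lemma conjTransporter_sdiff_subset_biUnion {ι : Type*} (S : Set G) {W : Set G} {t : Finset ι}
    {F : ι → Set G} (ht : ⋂ i ∈ t, F i ⊆ W) :
    conjTransporter K S \ conjTransporter K W ⊆
      ⋃ i ∈ t, conjTransporter K S \ conjTransporter K (F i) := by
  rintro g ⟨hgS, hgW⟩
  by_contra hg
  simp only [Set.mem_iUnion, Set.mem_sdiff, not_exists, not_and, not_not] at hg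
  exact hgW fun k hk => ht (Set.mem_iInter₂.mpr fun i hi => hg i hi hgS k hk)

variable [TopologicalSpace G] [IsTopologicalGroup G]

lemma isOpen_conjTransporter {V : Subgroup G} (hV : IsOpen (V : Set G)) :
    IsOpen (conjTransporter K V) := by
  refine isOpen_iff_forall_mem_open.mpr fun g hg => ⟨(· * g) '' V, ?_,
    isOpenMap_mul_right g _ hV, ⟨1, V.one_mem, one_mul g⟩⟩
  rintro _ ⟨v, hv, rfl⟩ k hk
  have hconj : v * g * k * (v * g)⁻¹ = v * (g * k * g⁻¹) * v⁻¹ := by group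
  rw [hconj]
  exact V.mul_mem (V.mul_mem hv (hg k hk)) (V.inv_mem hv)

lemma isClosed_conjTransporter {S : Set G} (hS : IsClosed S) :
    IsClosed (conjTransporter K S) := by
  have hinter : conjTransporter K S = ⋂ k ∈ K, (fun g => g * k * g⁻¹) ⁻¹' S := by
    ext g
    simp [conjTransporter]
  rw [hinter]
  exact isClosed_biInter fun k _ => hS.preimage (by fun_prop)

end ConjTransporter

lemma IsCompact.exists_finset_inter_iInter_subset {X ι : Type*} [TopologicalSpace X]
    {C W : Set X} (hC : IsCompact C) (hW : IsOpen W) {F : ι → Set X}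
    (hF : ∀ i, IsClosed (F i)) (hCF : C ∩ ⋂ i, F i ⊆ W) :
    ∃ t : Finset ι, C ∩ ⋂ i ∈ t, F i ⊆ W := by
  have hempty : C ∩ Wᶜ ∩ ⋂ i, F i = ∅ :=
    Set.eq_empty_iff_forall_notMem.mpr fun x ⟨⟨hxC, hxW⟩, hxF⟩ => hxW (hCF ⟨hxC, hxF⟩)
  obtain ⟨t, ht⟩ := (hC.inter_right hW.isClosed_compl).elim_finite_subfamily_closed F hF hempty
  refine ⟨t, fun x ⟨hxC, hxF⟩ => by_contra fun hxW => ?_⟩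
  exact (ht.subset ⟨⟨hxC, hxW⟩, hxF⟩ : x ∈ (∅ : Set X))

section TopologicalGroup

variable {G : Type*} [Group G] [TopologicalSpace G] [IsTopologicalGroup G]

lemma Subgroup.exists_finset_iInter_conj_subset {U W : Subgroup G} (hUc : IsCompact (U : Set G))
    (hUo : IsOpen (U : Set G)) (hWo : IsOpen (W : Set G))
    (hW : ∀ x : G, (∀ g : G, g⁻¹ * x * g ∈ U) → x ∈ W) :
    ∃ t : Finset G, ⋂ a ∈ t, (fun x => a * x * a⁻¹) '' (U : Set G) ⊆ W := by
  classical
  have hUcl : IsClosed (U : Set G) := U.isClosed_of_isOpen hUo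
  obtain ⟨t, ht⟩ := hUc.exists_finset_inter_iInter_subset hWo
    (fun a => hUcl.preimage (by fun_prop : Continuous fun x => a⁻¹ * x * a))
    fun x ⟨_, hx⟩ => hW x (Set.mem_iInter.mp hx)
  refine ⟨insert 1 t, fun x hx => ht ⟨?_, ?_⟩⟩
  · simpa using Set.mem_iInter₂.mp hx 1 (t.mem_insert_self 1)
  · refine Set.mem_iInter₂.mpr fun a ha => ?_
    rw [← conj_image_eq_preimage]
    exact Set.mem_iInter₂.mp hx a (t.mem_insert_of_mem ha)

lemma IsTMSPair.isCompact_closure_conjTransporter_sdiff {K U : Subgroup G} (hKU : IsTMSPair K U)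
    {N : Subgroup G} (hN : N.Normal) (hNc : IsCompact (N : Set G)) (h a : G) :
    IsCompact (closure (conjTransporter K ((fun x => h * x * h⁻¹) '' ((U : Set G) * N)) \
      conjTransporter K ((fun x => a * x * a⁻¹) '' (U : Set G)))) := by
  have hshift : (fun x => a * x * a⁻¹) '' (U : Set G) =
      (fun x => h * x * h⁻¹) '' ((fun x => (h⁻¹ * a) * x * (h⁻¹ * a)⁻¹) '' (U : Set G)) := by
    rw [conj_image_conj_image, mul_inv_cancel_left]
  rw [hshift, conjTransporter_conj_image, conjTransporter_conj_image,
    ← Set.image_sdiff (mul_right_injective h)]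
  have hcpt := (hKU.2.2.1 N hN hNc (h⁻¹ * a)).image (Homeomorph.mulLeft h).continuous
  rwa [Homeomorph.image_closure] at hcpt

lemma isCompact_closure_conjTransporter_sdiff_of_iInter_subset (K : Subgroup G) (S : Set G)
    {W : Set G} {ι : Type*} {t : Finset ι} {F : ι → Set G} (ht : ⋂ i ∈ t, F i ⊆ W)
    (hF : ∀ i, IsCompact (closure (conjTransporter K S \ conjTransporter K (F i)))) :
    IsCompact (closure (conjTransporter K S \ conjTransporter K W)) :=
  (t.isCompact_biUnion fun i _ => hF i).closure_of_subset
    ((conjTransporter_sdiff_subset_biUnion K S ht).trans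
      (Set.biUnion_mono le_rfl fun _ _ => subset_closure))

end TopologicalGroup

theorem tms_pair_transfer_general {G : Type*} [Group G] [TopologicalSpace G] [IsTopologicalGroup G]
    (K U V W : Subgroup G) (hKU : IsTMSPair K U)
    (hVo : IsOpen (V : Set G))
    (hWo : IsOpen (W : Set G))
    (hV : ∃ N : Subgroup G, N.Normal ∧ IsCompact (N : Set G) ∧
      ∃ h : G, (V : Set G) ⊆ (fun x => h * x * h⁻¹) '' ((U : Set G) * (N : Set G)))
    (hW : ∀ x : G, (∀ g : G, g⁻¹ * x * g ∈ U) → x ∈ W) :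
    IsCompact {g : G | (∀ k ∈ K, g * k * g⁻¹ ∈ V) ∧ ¬ ∀ k ∈ K, g * k * g⁻¹ ∈ W} ∧
    IsOpen {g : G | (∀ k ∈ K, g * k * g⁻¹ ∈ V) ∧ ¬ ∀ k ∈ K, g * k * g⁻¹ ∈ W} ∧
    ¬ IsCompact (closure {g : G | ∀ k ∈ K, g * k * g⁻¹ ∈ W}) := by
  obtain ⟨N, hN, hNc, h, hVUN⟩ := hV
  obtain ⟨t, ht⟩ := Subgroup.exists_finset_iInter_conj_subset hKU.1 hKU.2.1 hWo hW
  have hVW_closed : IsClosed (conjTransporter K V \ conjTransporter K W) :=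
    (isClosed_conjTransporter K (V.isClosed_of_isOpen hVo)).sdiff (isOpen_conjTransporter K hWo)
  refine ⟨?_, (isOpen_conjTransporter K hVo).sdiff
    (isClosed_conjTransporter K (W.isClosed_of_isOpen hWo)), fun hTW => ?_⟩
  · refine (isCompact_closure_conjTransporter_sdiff_of_iInter_subset K V ht fun a => ?_)
      |>.of_isClosed_subset hVW_closed subset_closure
    exact (hKU.isCompact_closure_conjTransporter_sdiff hN hNc h a).of_isClosed_subset
      isClosed_closure (closure_mono (Set.sdiff_subset_sdiff_left (conjTransporter_mono K hVUN)))
  · have hUW := isCompact_closure_conjTransporter_sdiff_of_iInter_subset K U ht fun a => by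
      simpa using hKU.isCompact_closure_conjTransporter_sdiff (N := ⊥) inferInstance
        (by simp) 1 a
    exact hKU.2.2.2.1 ((hTW.union hUW).closure_of_subset fun g hg =>
      (em (g ∈ conjTransporter K W)).imp (fun hgW => subset_closure hgW)
        fun hgW => subset_closure ⟨hg, hgW⟩)

/-- Lemma 4.3(iii): given a TMS pair (K,U), a compact open subgroup V contained in a
conjugate of UN (N compact normal) and a compact open subgroup W containing
⋂_{g ∈ G} gUg⁻¹, the set of g with gKg⁻¹ ≤ V but gKg⁻¹ ⊄ W is compact open, while the
set of g with gKg⁻¹ ≤ W does not have compact closure. -/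
theorem tms_pair_transfer {G : Type*} [Group G] [TopologicalSpace G] [IsTopologicalGroup G]
    [LocallyCompactSpace G] [TotallyDisconnectedSpace G] [T2Space G]
    (K U V W : Subgroup G) (hKU : IsTMSPair K U)
    (hVc : IsCompact (V : Set G)) (hVo : IsOpen (V : Set G))
    (hWc : IsCompact (W : Set G)) (hWo : IsOpen (W : Set G))
    (hV : ∃ N : Subgroup G, N.Normal ∧ IsCompact (N : Set G) ∧
      ∃ h : G, (V : Set G) ⊆ (fun x => h * x * h⁻¹) '' ((U : Set G) * (N : Set G)))
    (hW : ∀ x : G, (∀ g : G, g⁻¹ * x * g ∈ U) → x ∈ W) :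
    IsCompact {g : G | (∀ k ∈ K, g * k * g⁻¹ ∈ V) ∧ ¬ ∀ k ∈ K, g * k * g⁻¹ ∈ W} ∧
    IsOpen {g : G | (∀ k ∈ K, g * k * g⁻¹ ∈ V) ∧ ¬ ∀ k ∈ K, g * k * g⁻¹ ∈ W} ∧
    ¬ IsCompact (closure {g : G | ∀ k ∈ K, g * k * g⁻¹ ∈ W}) :=
  tms_pair_transfer_general K U V W hKU hVo hWo hV hW
end

section
/- Let G be a compactly generated t.d.l.c. group acting faithfully on a geometric G-set X equipped with a G-metric, and suppose (K,U) is a TMS pair of G for some compact open subgroup U such that ⋂_{g ∈ G} gUg^{-1} = {1}. Then for all sufficiently large r ≥ 0, the set X^{K,r} of points x ∈ X such that K fixes pointwise the ball of radius r around x is an almost separated subset of X, and both X^{K,r} and X \ X^{K,r} are infinite. Moreover, if X = G/V for some open subgroup V ≤ U (with the natural left G-action), then this conclusion holds for every r ≥ 0. -/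
open scoped Pointwise

section MetricActions

variable {G : Type*} [Group G] [TopologicalSpace G] {X : Type*} [MetricSpace X]

/-- The action is by isometries. -/
def IsometricAction (φ : G →* Equiv.Perm X) : Prop :=
  ∀ (g : G) (x y : X), dist (φ g x) (φ g y) = dist x y

/-- The action is proper: for every point and bound, the set of elements moving the point
less than the bound is an identity neighbourhood with compact closure. -/
def ProperMetricAction (φ : G →* Equiv.Perm X) : Prop :=
  ∀ (x : X) (n : ℝ), 0 < n → {g : G | dist x (φ g x) < n} ∈ nhds (1 : G) ∧
    IsCompact (closure {g : G | dist x (φ g x) < n})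

/-- The action is cocompact. -/
def CocompactMetricAction (φ : G →* Equiv.Perm X) : Prop :=
  ∃ n : ℝ, ∀ x y : X, ∃ g : G, dist x (φ g y) < n

/-- X is a geometric G-set: compact open point stabilisers and finitely many orbits. -/
def GeometricGSet (φ : G →* Equiv.Perm X) : Prop :=
  (∀ x : X, IsCompact {g : G | φ g x = x} ∧ IsOpen {g : G | φ g x = x}) ∧
  ∃ s : Set X, s.Finite ∧ ∀ x : X, ∃ y ∈ s, ∃ g : G, φ g y = x

/-- A subset of a metric space is almost separated if for every d, the set of points
outside A at distance at most d from A is bounded. -/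
def MetricAlmostSep (A : Set X) : Prop :=
  ∀ d : ℝ, Bornology.IsBounded {p : X | p ∉ A ∧ ∃ q ∈ A, dist p q ≤ d}

end MetricActions

/-- Two metric spaces are quasi-isometric. -/
def QuasiIsometric (X Y : Type*) [MetricSpace X] [MetricSpace Y] : Prop :=
  ∃ (L C : ℝ) (f : X → Y), 1 ≤ L ∧ 0 ≤ C ∧
    (∀ x x' : X, L⁻¹ * dist x x' - C ≤ dist (f x) (f x') ∧
      dist (f x) (f x') ≤ L * dist x x' + C) ∧
    (∀ y : Y, ∃ x : X, dist y (f x) ≤ C)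

section ConjInto

variable {G : Type*} [Group G]

def conjInto (K : Subgroup G) (W : Set G) : Set G := {g | ∀ k ∈ K, g * k * g⁻¹ ∈ W}

variable {K : Subgroup G}

theorem conjInto_mono {W W' : Set G} (h : W ⊆ W') : conjInto K W ⊆ conjInto K W' :=
  fun _ hg k hk => h (hg k hk)

theorem conjInto_image_conj (W : Set G) (h : G) :
    conjInto K ((fun x => h * x * h⁻¹) '' W) = h • conjInto K W := by
  ext g
  rw [Set.mem_smul_set_iff_inv_smul_mem, smul_eq_mul,
    Set.image_eq_preimage_of_inverse (f := fun x => h * x * h⁻¹) (g := fun x => h⁻¹ * x * h)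
      (fun x => by group) (fun x => by group)]
  refine forall₂_congr fun k _ => ?_
  simp only [Set.mem_preimage, mul_inv_rev, inv_inv, mul_assoc]

theorem smul_conjInto_self {U : Subgroup G} {u : G} (hu : u ∈ U) :
    u • conjInto K U = conjInto K U := by
  ext g
  rw [Set.mem_smul_set_iff_inv_smul_mem, smul_eq_mul]
  refine forall₂_congr fun k _ => ?_
  have : u⁻¹ * g * k * (u⁻¹ * g)⁻¹ = u⁻¹ * (g * k * g⁻¹) * u := by group
  rw [this, SetLike.mem_coe, SetLike.mem_coe, U.mul_mem_cancel_right hu,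
    U.mul_mem_cancel_left (U.inv_mem hu)]

end ConjInto

section CoreFree

variable {G : Type*} [Group G] [TopologicalSpace G] [IsTopologicalGroup G] {U : Subgroup G}

theorem exists_finset_forall_conj_mem_imp_mem (hUc : IsCompact (U : Set G))
    (hUo : IsOpen (U : Set G)) (hcore : ∀ x : G, (∀ g : G, g⁻¹ * x * g ∈ U) → x = 1)
    {W : Set G} (hW : IsOpen W) (h1 : (1 : G) ∈ W) :
    ∃ T : Finset G, ∀ x : G, (∀ t ∈ T, t⁻¹ * x * t ∈ U) → x ∈ W := by
  have hclosed : ∀ t : G, IsClosed {x : G | t⁻¹ * x * t ∈ U} := fun t =>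
    (U.isClosed_of_isOpen hUo).preimage (by fun_prop)
  have hempty : ((U : Set G) ∩ Wᶜ) ∩ ⋂ t : G, {x : G | t⁻¹ * x * t ∈ U} = ∅ := by
    refine Set.eq_empty_of_forall_notMem fun x ⟨⟨_, hxW⟩, hx⟩ => hxW ?_
    rw [hcore x (Set.mem_iInter.1 hx)]
    exact h1
  classical
  obtain ⟨T, hT⟩ := (hUc.inter_right hW.isClosed_compl).elim_finite_subfamily_closed _ hclosed
    hempty
  refine ⟨insert 1 T, fun x hx => by_contra fun hxW => ?_⟩
  have hxU : x ∈ U := by simpa using hx 1 (Finset.mem_insert_self 1 T)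
  exact (Set.eq_empty_iff_forall_notMem.1 hT) x
    ⟨⟨hxU, hxW⟩, Set.mem_iInter₂.2 fun t ht => hx t (Finset.mem_insert_of_mem ht)⟩

theorem exists_finset_biInter_smul_conjInto_subset (K : Subgroup G) (hUc : IsCompact (U : Set G))
    (hUo : IsOpen (U : Set G)) (hcore : ∀ x : G, (∀ g : G, g⁻¹ * x * g ∈ U) → x = 1)
    {W : Set G} (hW : IsOpen W) (h1 : (1 : G) ∈ W) :
    ∃ T : Finset G, ⋂ t ∈ T, t • conjInto K U ⊆ conjInto K W := by
  obtain ⟨T, hT⟩ := exists_finset_forall_conj_mem_imp_mem hUc hUo hcore hW h1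
  refine ⟨T, fun g hg k hk => hT _ fun t ht => ?_⟩
  have := Set.mem_smul_set_iff_inv_smul_mem.1 (Set.mem_iInter₂.1 hg t ht) k hk
  simpa [mul_assoc] using this

end CoreFree

namespace IsTMSPair

variable {G : Type*} [Group G] [TopologicalSpace G] {K U : Subgroup G}

theorem isCompact_closure_conjInto_diff (hTMS : IsTMSPair K U) (h : G) :
    IsCompact (closure (conjInto K U \ h • conjInto K U)) := by
  have := hTMS.2.2.1 ⊥ inferInstance (by simp) h
  rw [Subgroup.coe_bot, Set.singleton_one, mul_one] at this
  rwa [← conjInto_image_conj]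

theorem isCompact_closure_biUnion_conjInto_diff [IsTopologicalGroup G] (hTMS : IsTMSPair K U)
    {Q : Set G} (hQ : IsCompact Q) :
    IsCompact (closure (⋃ h ∈ Q, conjInto K U \ h • conjInto K U)) := by
  obtain ⟨T, hT⟩ := hQ.elim_finite_subcover (fun t : G => t • (U : Set G))
    (fun t => hTMS.2.1.smul t)
    fun h _ => Set.mem_iUnion.2 ⟨h, Set.mem_smul_set.2 ⟨1, U.one_mem, mul_one h⟩⟩
  have hcpt : IsCompact (⋃ t ∈ T, closure (conjInto K U \ t • conjInto K U)) :=
    T.finite_toSet.isCompact_biUnion fun t _ => hTMS.isCompact_closure_conjInto_diff t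
  refine hcpt.closure_of_subset (Set.iUnion₂_subset fun h hh => ?_)
  obtain ⟨t, ht, u, hu, rfl⟩ : ∃ t ∈ T, ∃ u ∈ U, t • u = h := by
    simpa only [Set.mem_iUnion₂, Set.mem_smul_set, SetLike.mem_coe, exists_prop] using hT hh
  rw [smul_eq_mul, mul_smul, smul_conjInto_self hu]
  exact subset_closure.trans
    (Set.subset_biUnion_of_mem (u := fun t => closure (conjInto K U \ t • conjInto K U)) ht)

theorem not_isCompact_closure_conjInto [IsTopologicalGroup G] (hTMS : IsTMSPair K U)
    (hcore : ∀ x : G, (∀ g : G, g⁻¹ * x * g ∈ U) → x = 1) {W : Set G} (hW : IsOpen W)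
    (h1 : (1 : G) ∈ W) : ¬ IsCompact (closure (conjInto K W)) := by
  obtain ⟨T, hT⟩ := exists_finset_biInter_smul_conjInto_subset K hTMS.1 hTMS.2.1 hcore hW h1
  intro hW
  apply hTMS.2.2.2.1
  refine (hW.union (T.finite_toSet.isCompact_biUnion fun t _ =>
    hTMS.isCompact_closure_conjInto_diff t)).closure_of_subset fun g hg => ?_
  by_cases hall : ∀ t ∈ T, g ∈ t • conjInto K U
  · exact Or.inl (subset_closure (hT (Set.mem_iInter₂.2 hall)))
  · push Not at hall
    obtain ⟨t, ht, hgt⟩ := hall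
    exact Or.inr (Set.mem_biUnion ht (subset_closure ⟨hg, hgt⟩))

theorem infinite (hTMS : IsTMSPair K U) : Infinite K := by
  have := hTMS.2.2.2.2 ⊥ inferInstance (by simp)
  rw [Subgroup.relIndex_bot_left, Nat.card_eq_zero] at this
  exact this.resolve_left (not_isEmpty_of_nonempty K)

end IsTMSPair

section OrbitMaps

variable {G : Type*} [Group G] [TopologicalSpace G] {X : Type*} {φ : G →* Equiv.Perm X}

theorem finite_image_apply_of_isCompact [ContinuousConstSMul G G] {y : X}
    (hy : IsOpen {g : G | φ g y = y}) {Q : Set G} (hQ : IsCompact Q) :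
    ((fun g => φ g y) '' Q).Finite := by
  obtain ⟨T, hT⟩ := hQ.elim_finite_subcover (fun g : G => g • {g : G | φ g y = y})
    (fun g => hy.smul g)
    fun g _ => Set.mem_iUnion.2 ⟨g, Set.mem_smul_set.2 ⟨1, by simp, mul_one g⟩⟩
  refine (T.finite_toSet.image fun g => φ g y).subset ?_
  rintro _ ⟨a, ha, rfl⟩
  obtain ⟨g, hg, h, hh : φ h y = y, rfl⟩ :
      ∃ g ∈ T, ∃ h ∈ {g : G | φ g y = y}, g • h = a := by
    simpa only [Set.mem_iUnion₂, Set.mem_smul_set, exists_prop] using hT ha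
  exact ⟨g, hg, by simp [hh]⟩

theorem isCompact_setOf_inv_apply_mem [IsTopologicalGroup G] {x : X}
    (hx : IsCompact {g : G | φ g x = x}) {S : Set X} (hS : S.Finite) :
    IsCompact {g : G | φ g⁻¹ x ∈ S} := by
  have hfiber : ∀ y : X, IsCompact {g : G | φ g x = y} := by
    intro y
    rcases Set.eq_empty_or_nonempty {g : G | φ g x = y} with hempty | ⟨g₀, rfl⟩
    · simp [hempty]
    convert hx.smul g₀ using 1
    ext g
    simp [Set.mem_smul_set_iff_inv_smul_mem, Equiv.Perm.mul_apply, Equiv.eq_symm_apply, eq_comm]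
  have : {g : G | φ g x ∈ S} = ⋃ y ∈ S, {g : G | φ g x = y} := by ext; simp
  exact (this ▸ hS.isCompact_biUnion fun y _ => hfiber y).inv

end OrbitMaps

section MetricActions

variable {G : Type*} [Group G] {X : Type*} [MetricSpace X] {φ : G →* Equiv.Perm X}

theorem ProperMetricAction.isCompact_closure_setOf_dist_le [TopologicalSpace G]
    [IsTopologicalGroup G] (hproper : ProperMetricAction φ) (hiso : IsometricAction φ)
    (x y : X) (d : ℝ) :
    IsCompact (closure {g : G | dist x (φ g y) ≤ d}) := by
  rcases Set.eq_empty_or_nonempty {g : G | dist x (φ g y) ≤ d} with hempty | ⟨g₀, hg₀⟩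
  · simp [hempty]
  have hd : 0 ≤ d := dist_nonneg.trans hg₀
  refine ((hproper x (2 * d + 1) (by linarith)).2.image
    (continuous_mul_const g₀)).closure_of_subset
    fun g (hg : dist x (φ g y) ≤ d) => ⟨g * g₀⁻¹, subset_closure ?_, by simp⟩
  have hmove : dist (φ g y) (φ (g * g₀⁻¹) x) = dist x (φ g₀ y) := by
    have : φ g y = φ (g * g₀⁻¹) (φ g₀ y) := by simp
    rw [this, hiso, dist_comm]
  show dist x (φ (g * g₀⁻¹) x) < 2 * d + 1
  linarith [dist_triangle x (φ g y) (φ (g * g₀⁻¹) x), hg₀.out]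

theorem GeometricGSet.finite_setOf_dist_le [TopologicalSpace G] [IsTopologicalGroup G]
    (hgeom : GeometricGSet φ) (hiso : IsometricAction φ) (hproper : ProperMetricAction φ)
    (x : X) (r : ℝ) :
    {y : X | dist x y ≤ r}.Finite := by
  obtain ⟨hstab, s, hs, hcov⟩ := hgeom
  refine (hs.biUnion fun z _ => finite_image_apply_of_isCompact (hstab z).2
    (hproper.isCompact_closure_setOf_dist_le hiso x z r)).subset fun y (hy : dist x y ≤ r) => ?_
  obtain ⟨z, hz, g, rfl⟩ := hcov y
  exact Set.mem_biUnion hz ⟨g, subset_closure hy, rfl⟩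

def ballFixer (φ : G →* Equiv.Perm X) (x : X) (r : ℝ) : Subgroup G :=
  (fixingSubgroup (Equiv.Perm X) {y | dist x y ≤ r}).comap φ

theorem mem_ballFixer {x : X} {r : ℝ} {g : G} :
    g ∈ ballFixer φ x r ↔ ∀ y : X, dist x y ≤ r → φ g y = y := by
  simp [ballFixer, mem_fixingSubgroup_iff, Equiv.Perm.smul_def]

theorem ballFixer_anti {x : X} {r r' : ℝ} (h : r ≤ r') :
    ballFixer φ x r' ≤ ballFixer φ x r :=
  fun _ hg => mem_ballFixer.2 fun y hy => mem_ballFixer.1 hg y (hy.trans h)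

theorem GeometricGSet.isOpen_ballFixer [TopologicalSpace G] [IsTopologicalGroup G]
    (hgeom : GeometricGSet φ) (hiso : IsometricAction φ) (hproper : ProperMetricAction φ)
    (x : X) (r : ℝ) :
    IsOpen (ballFixer φ x r : Set G) := by
  have : (ballFixer φ x r : Set G) = ⋂ y ∈ {y | dist x y ≤ r}, {g : G | φ g y = y} := by
    ext; simp [mem_ballFixer]
  rw [this]
  exact (hgeom.finite_setOf_dist_le hiso hproper x r).isOpen_biInter fun y _ => (hgeom.1 y).2

end MetricActions

section FixedBalls

variable {G : Type*} [Group G] {X : Type*} [MetricSpace X] {φ : G →* Equiv.Perm X}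

theorem exists_ballFixer_le [TopologicalSpace G] [IsTopologicalGroup G]
    (hfaith : Function.Injective φ) (hgeom : GeometricGSet φ) (hiso : IsometricAction φ)
    (hproper : ProperMetricAction φ) {U : Subgroup G} (hU : IsOpen (U : Set G)) (x : X) :
    ∃ r : ℝ, ballFixer φ x r ≤ U := by
  by_contra! hnot
  -- a common element of the nested compact sets `C n` would fix every point of `X`
  set C : ℕ → Set G := fun n => (ballFixer φ x n : Set G) \ U
  have hclosed : ∀ n, IsClosed (C n) := fun n =>
    ((ballFixer φ x n).isClosed_of_isOpen (hgeom.isOpen_ballFixer hiso hproper x n)).sdiff hU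
  have hC0 : IsCompact (C 0) := (hgeom.1 x).1.of_isClosed_subset (hclosed 0)
    fun g hg => mem_ballFixer.1 hg.1 x (by simp)
  have hne : ∀ n, (C n).Nonempty := fun n => by
    obtain ⟨g, hg, hgU⟩ := SetLike.not_le_iff_exists.1 (hnot n)
    exact ⟨g, hg, hgU⟩
  obtain ⟨g, hg⟩ := IsCompact.nonempty_iInter_of_sequence_nonempty_isCompact_isClosed C
    (fun n => Set.sdiff_subset_sdiff_left (ballFixer_anti (by push_cast; linarith))) hne hC0
    hclosed
  rw [Set.mem_iInter] at hg
  have hg1 : g = 1 := hfaith <| Equiv.ext fun y => by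
    simpa using mem_ballFixer.1 (hg ⌈dist x y⌉₊).1 y (Nat.le_ceil _)
  exact (hg 0).2 (hg1 ▸ U.one_mem)

/-- The set `X^{K,r}`. -/
def fixedBallSet (φ : G →* Equiv.Perm X) (K : Subgroup G) (r : ℝ) : Set X :=
  {x | ∀ k ∈ K, ∀ y : X, dist x y ≤ r → φ k y = y}

theorem IsometricAction.mem_conjInto_ballFixer_iff (hiso : IsometricAction φ) {K : Subgroup G}
    {g : G} {x : X} {r : ℝ} :
    g ∈ conjInto K (ballFixer φ x r) ↔ φ g⁻¹ x ∈ fixedBallSet φ K r := by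
  refine forall₂_congr fun k _ => ?_
  rw [SetLike.mem_coe, mem_ballFixer, ← (φ g).forall_congr_right]
  refine forall_congr' fun y => ?_
  rw [← hiso g⁻¹, ← Equiv.Perm.mul_apply, ← map_mul, inv_mul_cancel, map_one,
    Equiv.Perm.one_apply]
  simp [Equiv.Perm.mul_apply]

theorem exists_conjInto_apply_mem_of_ballFixer_le (hiso : IsometricAction φ) {K U : Subgroup G}
    {r : ℝ} {s : Set X} (hcov : ∀ x : X, ∃ y ∈ s, ∃ g : G, φ g y = x)
    (hsU : ∀ y ∈ s, ballFixer φ y r ≤ U) {q : X} (hq : q ∈ fixedBallSet φ K r) :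
    ∃ e ∈ conjInto K U, φ e q ∈ s := by
  obtain ⟨y, hy, g, rfl⟩ := hcov q
  exact ⟨g⁻¹, conjInto_mono (hsU y hy) (hiso.mem_conjInto_ballFixer_iff.2 (by simpa using hq)),
    by simpa using hy⟩

theorem compl_fixedBallSet_infinite (hfaith : Function.Injective φ) {K : Subgroup G} [Infinite K]
    {r : ℝ} (hr : 0 ≤ r) : (fixedBallSet φ K r)ᶜ.Infinite := by
  set F := fixedBallSet φ K r
  intro hfin
  have : Finite ↥Fᶜ := hfin.to_subtype
  have hfixF : ∀ k ∈ K, ∀ x ∈ F, φ k x = x := fun k hk x hx =>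
    hx k hk x (by simpa using hr)
  have hmaps : ∀ k ∈ K, ∀ z ∈ Fᶜ, φ k z ∈ Fᶜ := fun k hk z hz hkz =>
    hz (by rwa [← (φ k).injective (hfixF k hk _ hkz)])
  let restrict : K → (↥Fᶜ → ↥Fᶜ) := fun k z => ⟨φ k z, hmaps k k.2 z z.2⟩
  have hinj : Function.Injective restrict := fun k k' hkk' => Subtype.ext <| hfaith <|
    Equiv.ext fun x => by
      by_cases hx : x ∈ F
      · rw [hfixF k k.2 x hx, hfixF k' k'.2 x hx]
      · exact congrArg Subtype.val (congrFun hkk' ⟨x, hx⟩)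
  have := Finite.of_injective restrict hinj
  exact not_finite K

end FixedBalls

section Conclusions

variable {G : Type*} [Group G] [TopologicalSpace G] [IsTopologicalGroup G] {X : Type*}
  [MetricSpace X] {φ : G →* Equiv.Perm X} {K U : Subgroup G} {r : ℝ} {s : Set X}

theorem fixedBallSet_infinite (hgeom : GeometricGSet φ) (hiso : IsometricAction φ)
    (hproper : ProperMetricAction φ) (hTMS : IsTMSPair K U)
    (hcore : ∀ x : G, (∀ g : G, g⁻¹ * x * g ∈ U) → x = 1) (x : X) :
    (fixedBallSet φ K r).Infinite := by
  intro hfin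
  refine hTMS.not_isCompact_closure_conjInto hcore (hgeom.isOpen_ballFixer hiso hproper x r)
    (ballFixer φ x r).one_mem ?_
  have : conjInto K (ballFixer φ x r) = {g | φ g⁻¹ x ∈ fixedBallSet φ K r} :=
    Set.ext fun _ => hiso.mem_conjInto_ballFixer_iff
  rw [this]
  exact (isCompact_setOf_inv_apply_mem (hgeom.1 x).1 hfin).closure

theorem metricAlmostSep_fixedBallSet (hgeom : GeometricGSet φ) (hiso : IsometricAction φ)
    (hproper : ProperMetricAction φ) (hTMS : IsTMSPair K U)
    (hcore : ∀ x : G, (∀ g : G, g⁻¹ * x * g ∈ U) → x = 1) (hs : s.Finite)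
    (hcov : ∀ x : X, ∃ y ∈ s, ∃ g : G, φ g y = x)
    (hsU : ∀ y ∈ s, ballFixer φ y r ≤ U) :
    MetricAlmostSep (fixedBallSet φ K r) := by
  set F := fixedBallSet φ K r
  intro d
  choose T hT using fun y : X => exists_finset_biInter_smul_conjInto_subset K hTMS.1 hTMS.2.1
    hcore (hgeom.isOpen_ballFixer hiso hproper y r) (ballFixer φ y r).one_mem
  set Q : Set G := ⋃ z ∈ s, ⋃ y ∈ s, ⋃ t ∈ (T y : Set G),
    (· * t) '' closure {a : G | dist z (φ a y) ≤ d}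
  have hQ : IsCompact Q := hs.isCompact_biUnion fun z _ => hs.isCompact_biUnion fun y _ =>
    (T y).finite_toSet.isCompact_biUnion fun t _ =>
      (hproper.isCompact_closure_setOf_dist_le hiso z y d).image (continuous_mul_const t)
  set Z : Set G := ⋃ h ∈ Q, conjInto K U \ h • conjInto K U
  have hnear : ∀ p ∉ F, ∀ q ∈ F, dist p q ≤ d →
      ∃ z ∈ s, ∃ e ∈ Z, φ e q = z := by
    intro p hp q hq hpq
    obtain ⟨e, he, hez⟩ := exists_conjInto_apply_mem_of_ballFixer_le hiso hcov hsU hq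
    obtain ⟨y, hy, c, rfl⟩ := hcov p
    have hc : c⁻¹ ∉ conjInto K (ballFixer φ y r) := by
      rwa [hiso.mem_conjInto_ballFixer_iff, inv_inv]
    obtain ⟨t, ht, hct⟩ : ∃ t ∈ T y, c⁻¹ ∉ t • conjInto K U := by
      by_contra! h
      exact hc (hT y (Set.mem_iInter₂.2 h))
    refine ⟨_, hez, e, Set.mem_biUnion (x := e * c * t) ?_ ⟨he, ?_⟩, rfl⟩
    · refine Set.mem_biUnion hez (Set.mem_biUnion hy
        (Set.mem_biUnion ht ⟨e * c, subset_closure ?_, rfl⟩))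
      show dist (φ e q) (φ (e * c) y) ≤ d
      rwa [map_mul, Equiv.Perm.mul_apply, hiso, dist_comm]
    · rwa [Set.mem_smul_set_iff_inv_smul_mem, smul_eq_mul,
        show (e * c * t)⁻¹ * e = t⁻¹ * c⁻¹ by group, ← smul_eq_mul,
        ← Set.mem_smul_set_iff_inv_smul_mem]
  set Y : Set X := ⋃ z ∈ s, (fun g => φ g z) '' (closure Z)⁻¹
  have hY : Y.Finite := hs.biUnion fun z _ => finite_image_apply_of_isCompact (hgeom.1 z).2
    (hTMS.isCompact_closure_biUnion_conjInto_diff hQ).inv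
  refine ((Bornology.isBounded_biUnion hY).2 fun q _ =>
    Metric.isBounded_closedBall (x := q) (r := d)).subset ?_
  rintro p ⟨hp, q, hq, hpq⟩
  obtain ⟨z, hz, e, he, rfl⟩ := hnear p hp q hq hpq
  have hqY : q ∈ Y :=
    Set.mem_biUnion hz ⟨e⁻¹, Set.inv_mem_inv.2 (subset_closure he), by simp⟩
  exact Set.mem_biUnion hqY (Metric.mem_closedBall.2 hpq)

theorem fixedBallSet_almostSep_infinite (hfaith : Function.Injective φ)
    (hgeom : GeometricGSet φ) (hiso : IsometricAction φ) (hproper : ProperMetricAction φ)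
    (hTMS : IsTMSPair K U) (hcore : ∀ x : G, (∀ g : G, g⁻¹ * x * g ∈ U) → x = 1)
    (hr : 0 ≤ r) (hs : s.Finite) (hcov : ∀ x : X, ∃ y ∈ s, ∃ g : G, φ g y = x)
    (hsU : ∀ y ∈ s, ballFixer φ y r ≤ U) :
    MetricAlmostSep (fixedBallSet φ K r) ∧ (fixedBallSet φ K r).Infinite ∧
      (fixedBallSet φ K r)ᶜ.Infinite := by
  obtain ⟨x⟩ : Nonempty X := by
    by_contra hX
    have : IsEmpty X := not_nonempty_iff.1 hX
    have : Subsingleton G := hfaith.subsingleton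
    exact hTMS.2.2.2.1 (Set.toFinite _).isCompact
  have := hTMS.infinite
  exact ⟨metricAlmostSep_fixedBallSet hgeom hiso hproper hTMS hcore hs hcov hsU,
    fixedBallSet_infinite hgeom hiso hproper hTMS hcore x, compl_fixedBallSet_infinite hfaith hr⟩

end Conclusions

theorem tms_fixed_points_almost_separated_general {G : Type*} [Group G] [TopologicalSpace G]
    [IsTopologicalGroup G]
    {X : Type*} [MetricSpace X] (φ : G →* Equiv.Perm X)
    (hfaith : Function.Injective φ)
    (hiso : IsometricAction φ) (hproper : ProperMetricAction φ)
    (hgeom : GeometricGSet φ)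
    (K U : Subgroup G) (hTMS : IsTMSPair K U)
    (hcore : ∀ x : G, (∀ g : G, g⁻¹ * x * g ∈ U) → x = 1) :
    (∃ r₀ : ℝ, 0 ≤ r₀ ∧ ∀ r : ℝ, r₀ ≤ r →
      MetricAlmostSep {x : X | ∀ k ∈ K, ∀ y : X, dist x y ≤ r → φ k y = y} ∧
      {x : X | ∀ k ∈ K, ∀ y : X, dist x y ≤ r → φ k y = y}.Infinite ∧
      {x : X | ∀ k ∈ K, ∀ y : X, dist x y ≤ r → φ k y = y}ᶜ.Infinite) ∧
    (∀ V : Subgroup G, IsOpen (V : Set G) → V ≤ U →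
      (∃ e : X ≃ (G ⧸ V), ∀ (g : G) (x : X), e (φ g x) = g • e x) →
      ∀ r : ℝ, 0 ≤ r →
        MetricAlmostSep {x : X | ∀ k ∈ K, ∀ y : X, dist x y ≤ r → φ k y = y} ∧
        {x : X | ∀ k ∈ K, ∀ y : X, dist x y ≤ r → φ k y = y}.Infinite ∧
        {x : X | ∀ k ∈ K, ∀ y : X, dist x y ≤ r → φ k y = y}ᶜ.Infinite) := by
  refine ⟨?_, ?_⟩
  · obtain ⟨s, hs, hcov⟩ := hgeom.2
    choose R hR using exists_ballFixer_le hfaith hgeom hiso hproper hTMS.2.1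
    obtain ⟨R₀, hR₀⟩ := (hs.image R).bddAbove
    refine ⟨max R₀ 0, le_max_right _ _, fun r hr => ?_⟩
    refine fixedBallSet_almostSep_infinite hfaith hgeom hiso hproper hTMS hcore
      ((le_max_right _ _).trans hr) hs hcov fun y hy => (ballFixer_anti ?_).trans (hR y)
    exact (hR₀ ⟨y, hy, rfl⟩).trans ((le_max_left _ _).trans hr)
  · rintro V - hVU ⟨e, he⟩ r hr
    refine fixedBallSet_almostSep_infinite hfaith hgeom hiso hproper hTMS hcore hr
      (Set.finite_singleton (e.symm ((1 : G) : G ⧸ V))) (fun x => ?_) ?_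
    · obtain ⟨g, hg⟩ := QuotientGroup.mk_surjective (e x)
      exact ⟨_, rfl, g, e.injective (by rw [he, e.apply_symm_apply, ← hg]; simp)⟩
    · rintro _ rfl g hg
      have := congrArg e (mem_ballFixer.1 hg (e.symm ((1 : G) : G ⧸ V)) (by simpa using hr))
      rw [he, e.apply_symm_apply] at this
      exact hVU (by simpa [QuotientGroup.eq] using this)

/-- Lemma 4.4(ii): in the same setting, for all sufficiently large r the set of points
whose r-ball is fixed pointwise by K is almost separated, infinite and with infinite
complement; and if X = G/V with V ≤ U open, this holds for all r ≥ 0. -/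
theorem tms_fixed_points_almost_separated {G : Type*} [Group G] [TopologicalSpace G]
    [IsTopologicalGroup G] [LocallyCompactSpace G] [TotallyDisconnectedSpace G] [T2Space G]
    (hcg : CompactlyGeneratedGrp G)
    {X : Type*} [MetricSpace X] (φ : G →* Equiv.Perm X)
    (hfaith : Function.Injective φ)
    (hiso : IsometricAction φ) (hproper : ProperMetricAction φ)
    (hcocpct : CocompactMetricAction φ) (hgeom : GeometricGSet φ)
    (K U : Subgroup G) (hTMS : IsTMSPair K U)
    (hcore : ∀ x : G, (∀ g : G, g⁻¹ * x * g ∈ U) → x = 1) :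
    (∃ r₀ : ℝ, 0 ≤ r₀ ∧ ∀ r : ℝ, r₀ ≤ r →
      MetricAlmostSep {x : X | ∀ k ∈ K, ∀ y : X, dist x y ≤ r → φ k y = y} ∧
      {x : X | ∀ k ∈ K, ∀ y : X, dist x y ≤ r → φ k y = y}.Infinite ∧
      {x : X | ∀ k ∈ K, ∀ y : X, dist x y ≤ r → φ k y = y}ᶜ.Infinite) ∧
    (∀ V : Subgroup G, IsOpen (V : Set G) → V ≤ U →
      (∃ e : X ≃ (G ⧸ V), ∀ (g : G) (x : X), e (φ g x) = g • e x) →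
      ∀ r : ℝ, 0 ≤ r →
        MetricAlmostSep {x : X | ∀ k ∈ K, ∀ y : X, dist x y ≤ r → φ k y = y} ∧
        {x : X | ∀ k ∈ K, ∀ y : X, dist x y ≤ r → φ k y = y}.Infinite ∧
        {x : X | ∀ k ∈ K, ∀ y : X, dist x y ≤ r → φ k y = y}ᶜ.Infinite) :=
  tms_fixed_points_almost_separated_general φ hfaith hiso hproper hgeom K U hTMS hcore
end
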